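/- (Higher-moment sufficiency via Kronecker powers) Let $(A_t)$ be i.i.d. random nonnegative $n\times n$ matrices and $(B_t)$ i.i.d. nonnegative random vectors with the usual independence, and fix an integer $r\geq 1$. If $\rho\big(E[A_0^{\otimes r}]\big) < 1$ and $E[\|B_0\|^r]<\infty$, then the partial sums $S_n(t) = B_t + \sum_{k=1}^{n} A_t\cdots A_{t-k+1}B_{t-k}$ converge in $L^r$ and almost surely to a limit $Y_t$ with $E[\|Y_t\|^r]<\infty$ satisfying $Y_t = A_t Y_{t-1}+B_t$. -/

import Mathlib

/-!
Write `Δ_k(t) = A_t ⋯ A_{t-k+1} B_{t-k}`. Since `Δ_k(t)` has nonnegative entries,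
`‖Δ_k(t)‖^r ≤ ∑ᵢ (Δ_k(t)^{⊗r})ᵢ`, and by the mixed-product rule
`Δ_k(t)^{⊗r} = A_t^{⊗r} ⋯ A_{t-k+1}^{⊗r} B_{t-k}^{⊗r}` is a product of independent factors.
Hence `E‖Δ_k(t)‖^r ≤ ∑ᵢ (M^k b)ᵢ` with `M = E[A₀^{⊗r}]` and `b = E[B₀^{⊗r}]`, and Gelfand's
formula turns `ρ(M) < 1` into a bound `C qᵏ` with `q < 1`. So the `Lʳ` norms of the increments
are summable, which gives almost sure absolute convergence, `Lʳ` convergence of the partial sums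
and `Y_t ∈ Lʳ`. The recursion comes from `Δ_{k+1}(t) = A_t Δ_k(t-1)`.
-/

open MeasureTheory ProbabilityTheory Matrix Filter Topology

/-- Matrices carry the product (Borel) measurable structure. -/
instance matrixMeasurableSpace {m n : Type*} {α : Type*} [MeasurableSpace α] :
    MeasurableSpace (Matrix m n α) :=
  (inferInstance : MeasurableSpace (m → n → α))

/-- The `r`-fold Kronecker power `M^{⊗r}` of a square matrix. -/
noncomputable def kronPow {n : ℕ} (M : Matrix (Fin n) (Fin n) ℝ) :
    (r : ℕ) → Matrix (Fin (n ^ r)) (Fin (n ^ r)) ℝ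
  | 0 => 1
  | r + 1 =>
    Matrix.reindex (finProdFinEquiv.trans (finCongr (pow_succ n r).symm))
      (finProdFinEquiv.trans (finCongr (pow_succ n r).symm))
      (Matrix.kroneckerMap (· * ·) (kronPow M r) M)

/-- The `r`-fold Kronecker power `v^{⊗r}` of a vector. -/
noncomputable def kronPowVec {n : ℕ} (v : Fin n → ℝ) :
    (r : ℕ) → Fin (n ^ r) → ℝ
  | 0 => fun _ => 1
  | r + 1 => fun i =>
    kronPowVec v r ((finProdFinEquiv.trans (finCongr (pow_succ n r).symm)).symm i).1 *
      v ((finProdFinEquiv.trans (finCongr (pow_succ n r).symm)).symm i).2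

/-- `prodA A t ω k = A_t(ω) A_{t-1}(ω) ⋯ A_{t-k+1}(ω)` (`k` factors); the empty product is
the identity. -/
noncomputable def prodA {n : ℕ} {Ω : Type*} (A : ℤ → Ω → Matrix (Fin n) (Fin n) ℝ)
    (t : ℤ) (ω : Ω) : ℕ → Matrix (Fin n) (Fin n) ℝ
  | 0 => 1
  | k + 1 => prodA A t ω k * A (t - k) ω

open scoped NNReal ENNReal

section Spectral

variable {A : Type*} [NormedRing A] [NormedAlgebra ℂ A] [CompleteSpace A]

theorem spectralRadius_lt_one_of_forall_norm_lt_one {a : A} (ha : ∀ z ∈ spectrum ℂ a, ‖z‖ < 1) :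
    spectralRadius ℂ a < 1 := by
  rcases (spectrum ℂ a).eq_empty_or_nonempty with h | h
  · simp [spectralRadius, h]
  · exact_mod_cast spectrum.spectralRadius_lt_of_forall_lt_of_nonempty h fun z hz =>
      (by exact_mod_cast ha z hz : ‖z‖₊ < (1 : ℝ≥0))

theorem exists_norm_pow_le_geometric {a : A} (ha : ∀ z ∈ spectrum ℂ a, ‖z‖ < 1) :
    ∃ C q : ℝ, 0 < C ∧ 0 < q ∧ q < 1 ∧ ∀ k : ℕ, ‖a ^ k‖ ≤ C * q ^ k := by
  obtain ⟨Q, hρQ, hQ1⟩ := exists_between (spectralRadius_lt_one_of_forall_norm_lt_one ha)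
  have hQtop : Q ≠ ⊤ := (hQ1.trans ENNReal.one_lt_top).ne
  set q := Q.toReal
  have hq0 : 0 < q := ENNReal.toReal_pos (pos_of_gt hρQ).ne' hQtop
  have hq1 : q < 1 := ENNReal.toReal_lt_of_lt_ofReal (by simpa using hQ1)
  -- Gelfand's formula: `‖a ^ k‖ ^ (1 / k) → ρ(a) < q`
  have hev : ∀ᶠ k : ℕ in atTop, ‖a ^ k‖ ≤ q ^ k := by
    filter_upwards [(spectrum.pow_norm_pow_one_div_tendsto_nhds_spectralRadius
      a).eventually_lt_const hρQ, eventually_ge_atTop 1] with k hk hk1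
    have hk' : ‖a ^ k‖ ^ (1 / k : ℝ) < q := by
      rwa [← ENNReal.ofReal_toReal hQtop, ENNReal.ofReal_lt_ofReal_iff hq0] at hk
    have hkpos : (0 : ℝ) < k := by exact_mod_cast hk1
    calc ‖a ^ k‖ = (‖a ^ k‖ ^ (1 / k : ℝ)) ^ k := by
          rw [← Real.rpow_natCast, ← Real.rpow_mul (norm_nonneg _), one_div_mul_cancel hkpos.ne',
            Real.rpow_one]
      _ ≤ q ^ k := pow_le_pow_left₀ (by positivity) hk'.le k
  have hO : (fun k : ℕ => a ^ k) =O[atTop] fun k => q ^ k :=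
    Asymptotics.IsBigO.of_bound 1 (by
      filter_upwards [hev] with k hk
      rwa [one_mul, Real.norm_of_nonneg (by positivity)])
  obtain ⟨C, hC, hCq⟩ := Asymptotics.bound_of_isBigO_nat_atTop hO
  refine ⟨C, q, hC, hq0, hq1, fun k => ?_⟩
  simpa [Real.norm_of_nonneg (pow_pos hq0 k).le] using hCq (pow_pos hq0 k).ne'

end Spectral

section LinftyOp

attribute [local instance] Matrix.linftyOpNormedRing Matrix.linftyOpNormedAlgebra

theorem exists_norm_pow_mulVec_le_geometric {ι : Type*} [Fintype ι] [DecidableEq ι]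
    {M : Matrix ι ι ℝ} (hM : ∀ z ∈ spectrum ℂ (M.map (algebraMap ℝ ℂ)), ‖z‖ < 1) :
    ∃ C q : ℝ, 0 < C ∧ 0 < q ∧ q < 1 ∧
      ∀ (k : ℕ) (v : ι → ℝ), ‖(M ^ k) *ᵥ v‖ ≤ C * q ^ k * ‖v‖ := by
  obtain ⟨C, q, hC, hq0, hq1, hCq⟩ :=
    exists_norm_pow_le_geometric (a := M.map (algebraMap ℝ ℂ)) hM
  refine ⟨C, q, hC, hq0, hq1, fun k v => ?_⟩
  have hnorm : ‖M ^ k‖ = ‖(M.map (algebraMap ℝ ℂ)) ^ k‖ := by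
    rw [← RingHom.mapMatrix_apply, ← map_pow, RingHom.mapMatrix_apply, linfty_opNorm_def,
      linfty_opNorm_def]
    simp only [map_apply, nnnorm_algebraMap']
  calc ‖(M ^ k) *ᵥ v‖ ≤ ‖M ^ k‖ * ‖v‖ := linfty_opNorm_mulVec _ _
    _ ≤ C * q ^ k * ‖v‖ := by
      rw [hnorm]
      exact mul_le_mul_of_nonneg_right (hCq k) (norm_nonneg _)

end LinftyOp

section Kronecker

variable {n : ℕ}

theorem kronPow_succ (M : Matrix (Fin n) (Fin n) ℝ) (r : ℕ) :
    kronPow M (r + 1) =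
      reindex (finProdFinEquiv.trans (finCongr (pow_succ n r).symm))
        (finProdFinEquiv.trans (finCongr (pow_succ n r).symm))
        (kroneckerMap (· * ·) (kronPow M r) M) :=
  rfl

theorem kronPowVec_succ (v : Fin n → ℝ) (r : ℕ) (i : Fin (n ^ (r + 1))) :
    kronPowVec v (r + 1) i =
      kronPowVec v r ((finProdFinEquiv.trans (finCongr (pow_succ n r).symm)).symm i).1 *
        v ((finProdFinEquiv.trans (finCongr (pow_succ n r).symm)).symm i).2 :=
  rfl

theorem kronPow_one (r : ℕ) : kronPow (1 : Matrix (Fin n) (Fin n) ℝ) r = 1 := by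
  induction r with
  | zero => rfl
  | succ r ih => rw [kronPow_succ, ih, one_kronecker_one, reindex_apply, submatrix_one_equiv]

theorem kronPow_mul (M N : Matrix (Fin n) (Fin n) ℝ) (r : ℕ) :
    kronPow (M * N) r = kronPow M r * kronPow N r := by
  induction r with
  | zero => exact (mul_one _).symm
  | succ r ih =>
    rw [kronPow_succ, kronPow_succ, kronPow_succ, ih, mul_kronecker_mul, reindex_apply,
      reindex_apply, reindex_apply, submatrix_mul_equiv]

theorem kronPowVec_mulVec (M : Matrix (Fin n) (Fin n) ℝ) (v : Fin n → ℝ) (r : ℕ) :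
    kronPowVec (M *ᵥ v) r = kronPow M r *ᵥ kronPowVec v r := by
  induction r with
  | zero => exact (one_mulVec _).symm
  | succ r ih =>
    funext i
    conv_rhs => rw [mulVec, dotProduct,
      ← (finProdFinEquiv.trans (finCongr (pow_succ n r).symm)).sum_comp, Fintype.sum_prod_type]
    simp only [kronPowVec_succ, ih, mulVec, dotProduct, Finset.sum_mul_sum, kronPow_succ,
      reindex_apply, submatrix_apply, Equiv.symm_apply_apply, kroneckerMap_apply]
    exact Finset.sum_congr rfl fun _ _ => Finset.sum_congr rfl fun _ _ => by ring

theorem sum_kronPowVec (v : Fin n → ℝ) (r : ℕ) : ∑ i, kronPowVec v r i = (∑ i, v i) ^ r := by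
  induction r with
  | zero => simp only [kronPowVec, Finset.sum_const, Finset.card_fin]; simp
  | succ r ih =>
    rw [← (finProdFinEquiv.trans (finCongr (pow_succ n r).symm)).sum_comp, Fintype.sum_prod_type]
    simp only [kronPowVec_succ, Equiv.symm_apply_apply]
    rw [← Finset.sum_mul_sum, ih, pow_succ]

theorem abs_kronPowVec_le (v : Fin n → ℝ) (r : ℕ) (i : Fin (n ^ r)) :
    |kronPowVec v r i| ≤ ‖v‖ ^ r := by
  induction r with
  | zero => simp [kronPowVec]
  | succ r ih =>
    rw [kronPowVec_succ, abs_mul, pow_succ ‖v‖]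
    exact mul_le_mul (ih _) (norm_le_pi_norm v _) (abs_nonneg _) (by positivity)

theorem norm_pow_le_sum_kronPowVec {v : Fin n → ℝ} (hv : ∀ i, 0 ≤ v i) (r : ℕ) :
    ‖v‖ ^ r ≤ ∑ i, kronPowVec v r i := by
  rw [sum_kronPowVec]
  refine pow_le_pow_left₀ (norm_nonneg _) ((pi_norm_le_iff_of_nonneg
    (Finset.sum_nonneg fun i _ => hv i)).mpr fun i => ?_) r
  rw [Real.norm_of_nonneg (hv i)]
  exact Finset.single_le_sum (fun j _ => hv j) (Finset.mem_univ i)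

end Kronecker

section Measurability

variable {Ω : Type*} [MeasurableSpace Ω]

theorem measurable_matrix_iff {l m α : Type*} [MeasurableSpace α] {f : Ω → Matrix l m α} :
    Measurable f ↔ ∀ i j, Measurable fun ω => f ω i j :=
  measurable_pi_iff.trans <| forall_congr' fun _ => measurable_pi_iff

theorem measurable_matrix_col {l m : Type*} (j : m) :
    Measurable fun M : Matrix l m ℝ => fun i => M i j :=
  measurable_pi_iff.mpr fun i => measurable_matrix_iff.mp measurable_id i j

theorem Measurable.matrix_mul {l m o : Type*} [Fintype m] {f : Ω → Matrix l m ℝ}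
    {g : Ω → Matrix m o ℝ} (hf : Measurable f) (hg : Measurable g) :
    Measurable fun ω => f ω * g ω :=
  measurable_matrix_iff.mpr fun i j => Finset.measurable_sum _ fun k _ =>
    (measurable_matrix_iff.mp hf i k).mul (measurable_matrix_iff.mp hg k j)

theorem Measurable.matrix_mulVec {l m : Type*} [Fintype m] {f : Ω → Matrix l m ℝ}
    {v : Ω → m → ℝ} (hf : Measurable f) (hv : Measurable v) :
    Measurable fun ω => f ω *ᵥ v ω :=
  measurable_pi_iff.mpr fun i => Finset.measurable_sum _ fun k _ =>
    (measurable_matrix_iff.mp hf i k).mul (measurable_pi_iff.mp hv k)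

theorem measurable_kronPow {n : ℕ} (r : ℕ) :
    Measurable fun M : Matrix (Fin n) (Fin n) ℝ => kronPow M r := by
  induction r with
  | zero => exact measurable_const
  | succ r ih =>
    refine measurable_matrix_iff.mpr fun i j => ?_
    simp only [kronPow_succ, reindex_apply, submatrix_apply, kroneckerMap_apply]
    exact (measurable_matrix_iff.mp ih _ _).mul (measurable_matrix_iff.mp measurable_id _ _)

theorem measurable_kronPowVec {n : ℕ} (r : ℕ) :
    Measurable fun v : Fin n → ℝ => kronPowVec v r := by
  induction r with
  | zero => exact measurable_const
  | succ r ih =>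
    refine measurable_pi_iff.mpr fun i => ?_
    simp only [kronPowVec_succ]
    exact (measurable_pi_iff.mp ih _).mul (measurable_pi_apply _)

end Measurability

section ProdA

variable {n : ℕ} {Ω : Type*} {A : ℤ → Ω → Matrix (Fin n) (Fin n) ℝ}

theorem prodA_zero (t : ℤ) (ω : Ω) : prodA A t ω 0 = 1 := rfl

theorem prodA_succ (t : ℤ) (ω : Ω) (k : ℕ) : prodA A t ω (k + 1) = prodA A t ω k * A (t - k) ω :=
  rfl

theorem prodA_succ' (t : ℤ) (ω : Ω) (k : ℕ) :
    prodA A t ω (k + 1) = A t ω * prodA A (t - 1) ω k := by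
  induction k with
  | zero => simp [prodA]
  | succ k ih =>
    rw [prodA_succ, ih, mul_assoc, prodA_succ, sub_sub, Nat.cast_succ, add_comm (1 : ℤ)]

theorem prodA_nonneg {t : ℤ} {ω : Ω} (hA : ∀ s i j, 0 ≤ A s ω i j) (k : ℕ) (i j : Fin n) :
    0 ≤ prodA A t ω k i j := by
  induction k generalizing j with
  | zero => rw [prodA_zero, one_apply]; split_ifs <;> norm_num
  | succ k ih =>
    rw [prodA_succ, mul_apply]
    exact Finset.sum_nonneg fun l _ => mul_nonneg (ih l) (hA _ l j)

theorem prodA_congr {Ω' : Type*} {A' : ℤ → Ω' → Matrix (Fin n) (Fin n) ℝ} {t : ℤ} {ω : Ω}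
    {ω' : Ω'} {k : ℕ} (h : ∀ j < k, A (t - j) ω = A' (t - j) ω') :
    prodA A t ω k = prodA A' t ω' k := by
  induction k with
  | zero => rfl
  | succ k ih =>
    rw [prodA_succ, prodA_succ, ih fun j hj => h j (by omega), h k (by omega)]

theorem measurable_prodA [MeasurableSpace Ω] (hA : ∀ t, Measurable (A t)) (t : ℤ) (k : ℕ) :
    Measurable fun ω => prodA A t ω k := by
  induction k with
  | zero => exact measurable_const
  | succ k ih => exact ih.matrix_mul (hA _)

theorem tsum_prodA_mulVec_eq {B : ℤ → Ω → Fin n → ℝ} {t : ℤ} {ω : Ω}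
    (h : Summable fun k => prodA A (t - 1) ω k *ᵥ B (t - 1 - k) ω) :
    ∑' k, prodA A t ω k *ᵥ B (t - k) ω
      = A t ω *ᵥ (∑' k, prodA A (t - 1) ω k *ᵥ B (t - 1 - k) ω) + B t ω := by
  have hshift : ∀ k : ℕ, prodA A t ω (k + 1) *ᵥ B (t - (k + 1 : ℕ)) ω
      = A t ω *ᵥ (prodA A (t - 1) ω k *ᵥ B (t - 1 - k) ω) := fun k => by
    rw [prodA_succ', ← mulVec_mulVec, Nat.cast_succ, ← sub_sub, sub_right_comm]
  set L := (mulVecLin (A t ω)).toContinuousLinearMap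
  have hmap : Summable fun k => A t ω *ᵥ (prodA A (t - 1) ω k *ᵥ B (t - 1 - k) ω) := h.mapL L
  rw [tsum_eq_zero_add' (f := fun k => prodA A t ω k *ᵥ B (t - k) ω)
    ((summable_congr hshift).mpr hmap), tsum_congr hshift, prodA_zero, one_mulVec,
    Nat.cast_zero, sub_zero, add_comm]
  exact congrArg (· + B t ω) (L.map_tsum h).symm

end ProdA

section Independence

variable {Ω : Type*} [MeasurableSpace Ω] {μ : Measure Ω}

theorem indepFun_prodA {n : ℕ} {β : Type*} [MeasurableSpace β]
    {A : ℤ → Ω → Matrix (Fin n) (Fin n) ℝ} {B : ℤ → Ω → β}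
    (hmeas : ∀ t, Measurable fun ω => (A t ω, B t ω))
    (hindep : iIndepFun (fun t ω => (A t ω, B t ω)) μ) (t : ℤ) (k : ℕ) :
    IndepFun (fun ω => prodA A t ω k) (fun ω => (A (t - k) ω, B (t - k) ω)) μ := by
  set S := (Finset.range k).image fun j : ℕ => t - j
  have hS : ∀ j < k, t - j ∈ S := fun j hj => Finset.mem_image_of_mem _ (Finset.mem_range.mpr hj)
  have hdisj : Disjoint S {t - (k : ℤ)} := by
    simp only [S, Finset.disjoint_singleton_right, Finset.mem_image, Finset.mem_range]
    omega
  -- `prodA A t ω k` only reads the coordinates of `(A s ω, B s ω)` indexed by `S`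
  let past : (S → Matrix (Fin n) (Fin n) ℝ × β) → Matrix (Fin n) (Fin n) ℝ :=
    fun g => prodA (fun s g => if h : s ∈ S then (g ⟨s, h⟩).1 else 0) t g k
  have hpast : Measurable past := by
    refine measurable_prodA (fun s => ?_) t k
    by_cases h : s ∈ S
    · simpa only [dif_pos h] using (measurable_pi_apply _).fst
    · simpa only [dif_neg h] using measurable_const
  have hfactor : (fun ω => prodA A t ω k) = past ∘ fun ω (s : S) => (A s ω, B s ω) :=
    funext fun ω => prodA_congr fun j hj => by simp only [dif_pos (hS j hj)]
  rw [hfactor]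
  exact (hindep.indepFun_finset S {t - (k : ℤ)} hdisj hmeas).comp hpast
    (measurable_pi_apply ⟨t - k, Finset.mem_singleton_self _⟩)

variable {ι : Type*} [Fintype ι]

theorem ProbabilityTheory.IndepFun.integrable_dotProduct {X Y : Ω → ι → ℝ} (h : IndepFun X Y μ)
    (hX : ∀ i, Integrable (fun ω => X ω i) μ) (hY : ∀ i, Integrable (fun ω => Y ω i) μ) :
    Integrable (fun ω => X ω ⬝ᵥ Y ω) μ :=
  integrable_finsetSum _ fun i _ =>
    (h.comp (measurable_pi_apply i) (measurable_pi_apply i)).integrable_mul (hX i) (hY i)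

theorem ProbabilityTheory.IndepFun.integral_dotProduct {X Y : Ω → ι → ℝ} (h : IndepFun X Y μ)
    (hX : ∀ i, Integrable (fun ω => X ω i) μ) (hY : ∀ i, Integrable (fun ω => Y ω i) μ) :
    ∫ ω, X ω ⬝ᵥ Y ω ∂μ = (fun i => ∫ ω, X ω i ∂μ) ⬝ᵥ fun i => ∫ ω, Y ω i ∂μ := by
  have hprod : ∀ i, Integrable (fun ω => X ω i * Y ω i) μ := fun i =>
    (h.comp (measurable_pi_apply i) (measurable_pi_apply i)).integrable_mul (hX i) (hY i)
  simp only [dotProduct]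
  rw [integral_finsetSum _ fun i _ => hprod i]
  exact Finset.sum_congr rfl fun i _ =>
    (h.comp (measurable_pi_apply i) (measurable_pi_apply i)).integral_fun_mul_eq_mul_integral
      (hX i).1 (hY i).1

variable {l o : Type*}

theorem ProbabilityTheory.IndepFun.integrable_mul_apply {X : Ω → Matrix l ι ℝ}
    {Y : Ω → Matrix ι o ℝ}
    (h : IndepFun X Y μ) (hX : ∀ i j, Integrable (fun ω => X ω i j) μ)
    (hY : ∀ i j, Integrable (fun ω => Y ω i j) μ) (i : l) (j : o) :
    Integrable (fun ω => (X ω * Y ω) i j) μ := by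
  simp only [mul_apply']
  exact (h.comp (measurable_pi_apply i) (measurable_matrix_col j)).integrable_dotProduct (hX i)
    fun k => hY k j

theorem ProbabilityTheory.IndepFun.integral_mul_apply {X : Ω → Matrix l ι ℝ} {Y : Ω → Matrix ι o ℝ}
    (h : IndepFun X Y μ) (hX : ∀ i j, Integrable (fun ω => X ω i j) μ)
    (hY : ∀ i j, Integrable (fun ω => Y ω i j) μ) (i : l) (j : o) :
    ∫ ω, (X ω * Y ω) i j ∂μ
      = ((of fun i k => ∫ ω, X ω i k ∂μ) * of fun k j => ∫ ω, Y ω k j ∂μ) i j := by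
  simp only [mul_apply']
  exact (h.comp (measurable_pi_apply i) (measurable_matrix_col j)).integral_dotProduct (hX i)
    fun k => hY k j

theorem ProbabilityTheory.IndepFun.integrable_mulVec_apply {X : Ω → Matrix l ι ℝ} {v : Ω → ι → ℝ}
    (h : IndepFun X v μ) (hX : ∀ i j, Integrable (fun ω => X ω i j) μ)
    (hv : ∀ j, Integrable (fun ω => v ω j) μ) (i : l) :
    Integrable (fun ω => (X ω *ᵥ v ω) i) μ :=
  (h.comp (measurable_pi_apply i) measurable_id).integrable_dotProduct (hX i) hv

theorem ProbabilityTheory.IndepFun.integral_mulVec_apply {X : Ω → Matrix l ι ℝ} {v : Ω → ι → ℝ}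
    (h : IndepFun X v μ) (hX : ∀ i j, Integrable (fun ω => X ω i j) μ)
    (hv : ∀ j, Integrable (fun ω => v ω j) μ) (i : l) :
    ∫ ω, (X ω *ᵥ v ω) i ∂μ = ((of fun i j => ∫ ω, X ω i j ∂μ) *ᵥ fun j => ∫ ω, v ω j ∂μ) i :=
  (h.comp (measurable_pi_apply i) measurable_id).integral_dotProduct (hX i) hv

end Independence

section Series

theorem summable_mul_pow_rpow {D q s : ℝ} (hD : 0 ≤ D) (hq0 : 0 ≤ q) (hq1 : q < 1) (hs : 0 < s) :
    Summable fun k : ℕ => (D * q ^ k) ^ s := by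
  have hsplit : (fun k : ℕ => (D * q ^ k) ^ s) = fun k => D ^ s * (q ^ s) ^ k := funext fun k => by
    rw [Real.mul_rpow hD (by positivity), ← Real.rpow_natCast, ← Real.rpow_natCast,
      ← Real.rpow_mul hq0, ← Real.rpow_mul hq0, mul_comm (k : ℝ) s]
  rw [hsplit]
  exact (summable_geometric_of_lt_one (by positivity) (Real.rpow_lt_one hq0 hq1 hs)).mul_left _

variable {Ω E : Type*} [MeasurableSpace Ω] {μ : Measure Ω} [NormedAddCommGroup E] {p : ℝ≥0∞}
  {f : ℕ → Ω → E}

theorem ae_summable_of_tsum_eLpNorm_ne_top [CompleteSpace E] (hp : 1 ≤ p)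
    (hf : ∀ k, AEStronglyMeasurable (f k) μ) (hsum : ∑' k, eLpNorm (f k) p μ ≠ ∞) :
    ∀ᵐ ω ∂μ, Summable fun k => f k ω :=
  (summable_norm_of_tsum_eLpNorm_ne_top hp hf hsum).mono fun _ h => h.of_norm

theorem eLpNorm_tsum_le (hp : 1 ≤ p) (hf : ∀ k, AEStronglyMeasurable (f k) μ)
    (hsum : ∀ᵐ ω ∂μ, Summable fun k => f k ω) :
    eLpNorm (fun ω => ∑' k, f k ω) p μ ≤ ∑' k, eLpNorm (f k) p μ :=
  Lp.eLpNorm_le_of_ae_tendsto (f := fun N => ∑ k ∈ Finset.range N, f k)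
    (Eventually.of_forall fun _ => (eLpNorm_sum_le (fun k _ => hf k) hp).trans
      (ENNReal.sum_le_tsum _))
    (fun _ => Finset.aestronglyMeasurable_sum _ fun k _ => hf k)
    (hsum.mono fun _ h => by simpa only [Finset.sum_apply] using h.hasSum.tendsto_sum_nat)

theorem integral_norm_pow_eq_toReal_eLpNorm_pow {r : ℕ} (hr : r ≠ 0) {g : Ω → E}
    (hg : AEStronglyMeasurable g μ) : ∫ ω, ‖g ω‖ ^ r ∂μ = (eLpNorm g r μ).toReal ^ r := by
  rw [toReal_eLpNorm hg, lpNorm_eq_integral_norm_rpow_toReal (by exact_mod_cast hr)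
    (ENNReal.natCast_ne_top r) hg, ENNReal.toReal_natCast,
    Real.rpow_inv_natCast_pow (integral_nonneg fun _ => by positivity) hr]
  simp only [Real.rpow_natCast]

theorem eLpNorm_le_of_integral_norm_pow_le {r : ℕ} (hr : r ≠ 0) {g : Ω → E}
    (hg : AEStronglyMeasurable g μ) (hint : Integrable (fun ω => ‖g ω‖ ^ r) μ) {c : ℝ}
    (hc : ∫ ω, ‖g ω‖ ^ r ∂μ ≤ c) : eLpNorm g r μ ≤ ENNReal.ofReal (c ^ (r⁻¹ : ℝ)) := by
  have hmem : MemLp g r μ := by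
    rw [← integrable_norm_rpow_iff hg (by exact_mod_cast hr) (ENNReal.natCast_ne_top r)]
    simpa only [ENNReal.toReal_natCast, Real.rpow_natCast] using hint
  rw [← ENNReal.ofReal_toReal hmem.eLpNorm_ne_top]
  refine ENNReal.ofReal_le_ofReal ((Real.le_rpow_inv_iff_of_pos ENNReal.toReal_nonneg
    ((integral_nonneg fun _ => by positivity).trans hc) (by positivity)).mpr ?_)
  rw [Real.rpow_natCast, ← integral_norm_pow_eq_toReal_eLpNorm_pow hr hg]
  exact hc

variable [CompleteSpace E]

theorem memLp_tsum_of_tsum_eLpNorm_ne_top (hp : 1 ≤ p) (hf : ∀ k, AEStronglyMeasurable (f k) μ)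
    (hsum : ∑' k, eLpNorm (f k) p μ ≠ ∞) : MemLp (fun ω => ∑' k, f k ω) p μ := by
  have hae := ae_summable_of_tsum_eLpNorm_ne_top hp hf hsum
  refine ⟨aestronglyMeasurable_of_tendsto_ae atTop
    (f := fun N ω => ∑ k ∈ Finset.range N, f k ω)
    (fun _ => Finset.aestronglyMeasurable_fun_sum _ fun k _ => hf k)
    (hae.mono fun _ h => h.hasSum.tendsto_sum_nat), ?_⟩
  exact (eLpNorm_tsum_le hp hf hae).trans_lt hsum.lt_top

theorem tendsto_eLpNorm_sum_range_sub_tsum (hp : 1 ≤ p) (hf : ∀ k, AEStronglyMeasurable (f k) μ)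
    (hsum : ∑' k, eLpNorm (f k) p μ ≠ ∞) :
    Tendsto (fun N => eLpNorm (fun ω => ∑ k ∈ Finset.range N, f k ω - ∑' k, f k ω) p μ) atTop
      (𝓝 0) := by
  have hae := ae_summable_of_tsum_eLpNorm_ne_top hp hf hsum
  have htail : ∀ N, eLpNorm (fun ω => ∑ k ∈ Finset.range N, f k ω - ∑' k, f k ω) p μ
      ≤ ∑' k, eLpNorm (f (k + N)) p μ := by
    intro N
    have hneg : (fun ω => ∑ k ∈ Finset.range N, f k ω - ∑' k, f k ω)
        =ᵐ[μ] fun ω => -∑' k, f (k + N) ω := by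
      filter_upwards [hae] with ω h
      rw [← h.sum_add_tsum_nat_add N, sub_add_cancel_left]
    rw [eLpNorm_congr_ae hneg, ← Pi.neg_def, eLpNorm_neg]
    exact eLpNorm_tsum_le hp (fun k => hf (k + N))
      (hae.mono fun _ h => (summable_nat_add_iff N).mpr h)
  exact tendsto_of_tendsto_of_tendsto_of_le_of_le tendsto_const_nhds
    (ENNReal.tendsto_sum_nat_add _ hsum) (fun _ => zero_le) htail

theorem tendsto_integral_norm_sum_range_sub_tsum_pow {r : ℕ} (hr : 1 ≤ r)
    (hf : ∀ k, AEStronglyMeasurable (f k) μ) (hsum : ∑' k, eLpNorm (f k) r μ ≠ ∞) :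
    Tendsto (fun N => ∫ ω, ‖∑ k ∈ Finset.range N, f k ω - ∑' k, f k ω‖ ^ r ∂μ) atTop (𝓝 0) := by
  have hp : (1 : ℝ≥0∞) ≤ r := by exact_mod_cast hr
  have hlim := ((ENNReal.tendsto_toReal ENNReal.zero_ne_top).comp
    (tendsto_eLpNorm_sum_range_sub_tsum hp hf hsum)).pow r
  rw [ENNReal.toReal_zero, zero_pow (by omega)] at hlim
  refine hlim.congr fun N => (integral_norm_pow_eq_toReal_eLpNorm_pow (by omega) ?_).symm
  exact (Finset.aestronglyMeasurable_fun_sum _ fun k _ => hf k).sub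
    (memLp_tsum_of_tsum_eLpNorm_ne_top hp hf hsum).1

end Series

structure IsIIDSeq {n : ℕ} {Ω : Type*} [MeasurableSpace Ω] (μ : Measure Ω)
    (A : ℤ → Ω → Matrix (Fin n) (Fin n) ℝ) (B : ℤ → Ω → Fin n → ℝ) : Prop where
  measurable : ∀ t, Measurable fun ω => (A t ω, B t ω)
  indep : iIndepFun (fun t ω => (A t ω, B t ω)) μ
  identDistrib : ∀ t, IdentDistrib (fun ω => (A t ω, B t ω)) (fun ω => (A 0 ω, B 0 ω)) μ μ

section Moments

variable {n : ℕ} {Ω : Type*} [MeasurableSpace Ω] {μ : Measure Ω}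
  {A : ℤ → Ω → Matrix (Fin n) (Fin n) ℝ} {B : ℤ → Ω → Fin n → ℝ} {r : ℕ}

theorem IsIIDSeq.integrable_kronPow (h : IsIIDSeq μ A B)
    (hAkronInt : ∀ i j, Integrable (fun ω => kronPow (A 0 ω) r i j) μ) (s : ℤ)
    (i j : Fin (n ^ r)) : Integrable (fun ω => kronPow (A s ω) r i j) μ :=
  ((h.identDistrib s).comp ((measurable_matrix_iff.mp (measurable_kronPow r) i j).comp
    measurable_fst)).integrable_iff.mpr (hAkronInt i j)

theorem IsIIDSeq.indepFun_kronPow_prodA (h : IsIIDSeq μ A B) (t : ℤ) (k : ℕ) :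
    IndepFun (fun ω => kronPow (prodA A t ω k) r) (fun ω => kronPow (A (t - k) ω) r) μ :=
  (indepFun_prodA h.measurable h.indep t k).comp (measurable_kronPow r)
    ((measurable_kronPow r).comp measurable_fst)

theorem integrable_kronPow_prodA [IsFiniteMeasure μ] (h : IsIIDSeq μ A B)
    (hAkronInt : ∀ i j, Integrable (fun ω => kronPow (A 0 ω) r i j) μ) (t : ℤ) (k : ℕ)
    (i j : Fin (n ^ r)) : Integrable (fun ω => kronPow (prodA A t ω k) r i j) μ := by
  induction k generalizing i j with
  | zero => simpa only [prodA_zero, kronPow_one] using integrable_const _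
  | succ k ih =>
    simp only [prodA_succ, kronPow_mul]
    exact (h.indepFun_kronPow_prodA t k).integrable_mul_apply ih
      (h.integrable_kronPow hAkronInt _) i j

theorem integral_kronPow_prodA [IsProbabilityMeasure μ] (h : IsIIDSeq μ A B)
    (hAkronInt : ∀ i j, Integrable (fun ω => kronPow (A 0 ω) r i j) μ) (t : ℤ) (k : ℕ)
    (i j : Fin (n ^ r)) :
    ∫ ω, kronPow (prodA A t ω k) r i j ∂μ
      = ((of fun i j => ∫ ω, kronPow (A 0 ω) r i j ∂μ) ^ k) i j := by
  induction k generalizing i j with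
  | zero => simp [prodA_zero, kronPow_one]
  | succ k ih =>
    have hmean : (of fun i j => ∫ ω, kronPow (A (t - k) ω) r i j ∂μ)
        = of fun i j => ∫ ω, kronPow (A 0 ω) r i j ∂μ := ext fun i j =>
      ((h.identDistrib _).comp ((measurable_matrix_iff.mp (measurable_kronPow r) i j).comp
        measurable_fst)).integral_eq
    have hpow : (of fun i j => ∫ ω, kronPow (prodA A t ω k) r i j ∂μ)
        = (of fun i j => ∫ ω, kronPow (A 0 ω) r i j ∂μ) ^ k := ext ih
    simp only [prodA_succ, kronPow_mul]
    rw [(h.indepFun_kronPow_prodA t k).integral_mul_apply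
      (integrable_kronPow_prodA h hAkronInt t k)
      (h.integrable_kronPow hAkronInt _), pow_succ, hmean, hpow]

theorem IsIIDSeq.integrable_kronPowVec (h : IsIIDSeq μ A B)
    (hBrInt : Integrable (fun ω => ‖B 0 ω‖ ^ r) μ) (s : ℤ) (i : Fin (n ^ r)) :
    Integrable (fun ω => kronPowVec (B s ω) r i) μ := by
  have hcoord : Measurable fun x : Matrix (Fin n) (Fin n) ℝ × (Fin n → ℝ) => kronPowVec x.2 r i :=
    ((measurable_kronPowVec r).eval).comp measurable_snd
  refine ((h.identDistrib s).comp hcoord).integrable_iff.mpr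
    (hBrInt.mono' ?_ (.of_forall fun ω => ?_))
  · exact (hcoord.comp (h.measurable 0)).aestronglyMeasurable
  · exact (Real.norm_eq_abs _).trans_le (abs_kronPowVec_le _ r i)

theorem IsIIDSeq.indepFun_kronPow_prodA_kronPowVec (h : IsIIDSeq μ A B) (t : ℤ) (k : ℕ) :
    IndepFun (fun ω => kronPow (prodA A t ω k) r) (fun ω => kronPowVec (B (t - k) ω) r) μ :=
  (indepFun_prodA h.measurable h.indep t k).comp (measurable_kronPow r)
    ((measurable_kronPowVec r).comp measurable_snd)

theorem integrable_kronPowVec_prodA_mulVec [IsFiniteMeasure μ] (h : IsIIDSeq μ A B)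
    (hAkronInt : ∀ i j, Integrable (fun ω => kronPow (A 0 ω) r i j) μ)
    (hBrInt : Integrable (fun ω => ‖B 0 ω‖ ^ r) μ) (t : ℤ) (k : ℕ) (i : Fin (n ^ r)) :
    Integrable (fun ω => kronPowVec (prodA A t ω k *ᵥ B (t - k) ω) r i) μ := by
  simp only [kronPowVec_mulVec]
  exact (h.indepFun_kronPow_prodA_kronPowVec t k).integrable_mulVec_apply
    (integrable_kronPow_prodA h hAkronInt t k)
    (h.integrable_kronPowVec hBrInt _) i

theorem integral_kronPowVec_prodA_mulVec [IsProbabilityMeasure μ] (h : IsIIDSeq μ A B)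
    (hAkronInt : ∀ i j, Integrable (fun ω => kronPow (A 0 ω) r i j) μ)
    (hBrInt : Integrable (fun ω => ‖B 0 ω‖ ^ r) μ) (t : ℤ) (k : ℕ) (i : Fin (n ^ r)) :
    ∫ ω, kronPowVec (prodA A t ω k *ᵥ B (t - k) ω) r i ∂μ
      = ((of fun i j => ∫ ω, kronPow (A 0 ω) r i j ∂μ) ^ k *ᵥ
          fun j => ∫ ω, kronPowVec (B 0 ω) r j ∂μ) i := by
  have hmean : (fun j => ∫ ω, kronPowVec (B (t - k) ω) r j ∂μ)
      = fun j => ∫ ω, kronPowVec (B 0 ω) r j ∂μ := funext fun j =>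
    ((h.identDistrib _).comp (((measurable_kronPowVec r).eval).comp measurable_snd)).integral_eq
  have hpow : (of fun i j => ∫ ω, kronPow (prodA A t ω k) r i j ∂μ)
      = (of fun i j => ∫ ω, kronPow (A 0 ω) r i j ∂μ) ^ k :=
    ext (integral_kronPow_prodA h hAkronInt t k)
  simp only [kronPowVec_mulVec]
  rw [(h.indepFun_kronPow_prodA_kronPowVec t k).integral_mulVec_apply
    (integrable_kronPow_prodA h hAkronInt t k)
    (h.integrable_kronPowVec hBrInt _), hmean, hpow]

theorem norm_prodA_mulVec_pow_le_sum_kronPowVec (hApos : ∀ t, ∀ᵐ ω ∂μ, ∀ i j, 0 ≤ A t ω i j)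
    (hBpos : ∀ t, ∀ᵐ ω ∂μ, ∀ i, 0 ≤ B t ω i) (t : ℤ) (k : ℕ) :
    ∀ᵐ ω ∂μ, ‖prodA A t ω k *ᵥ B (t - k) ω‖ ^ r
      ≤ ∑ i, kronPowVec (prodA A t ω k *ᵥ B (t - k) ω) r i := by
  filter_upwards [ae_all_iff.mpr hApos, ae_all_iff.mpr hBpos] with ω hA hB
  refine norm_pow_le_sum_kronPowVec (fun i => ?_) r
  rw [mulVec, dotProduct]
  exact Finset.sum_nonneg fun j _ => mul_nonneg (prodA_nonneg hA k i j) (hB _ j)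

theorem IsIIDSeq.measurable_prodA_mulVec (h : IsIIDSeq μ A B) (t : ℤ) (k : ℕ) :
    Measurable fun ω => prodA A t ω k *ᵥ B (t - k) ω :=
  (measurable_prodA (fun s => (h.measurable s).fst) t k).matrix_mulVec (h.measurable _).snd

theorem integrable_norm_prodA_mulVec_pow [IsFiniteMeasure μ] (h : IsIIDSeq μ A B)
    (hApos : ∀ t, ∀ᵐ ω ∂μ, ∀ i j, 0 ≤ A t ω i j) (hBpos : ∀ t, ∀ᵐ ω ∂μ, ∀ i, 0 ≤ B t ω i)
    (hAkronInt : ∀ i j, Integrable (fun ω => kronPow (A 0 ω) r i j) μ)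
    (hBrInt : Integrable (fun ω => ‖B 0 ω‖ ^ r) μ) (t : ℤ) (k : ℕ) :
    Integrable (fun ω => ‖prodA A t ω k *ᵥ B (t - k) ω‖ ^ r) μ := by
  refine (integrable_finsetSum Finset.univ fun i _ => integrable_kronPowVec_prodA_mulVec h
    hAkronInt hBrInt t k i).mono' ?_ ?_
  · exact ((h.measurable_prodA_mulVec t k).norm.pow_const r).aestronglyMeasurable
  · filter_upwards [norm_prodA_mulVec_pow_le_sum_kronPowVec hApos hBpos t k] with ω hω
    rwa [Real.norm_of_nonneg (by positivity)]

theorem integral_norm_prodA_mulVec_pow_le [IsProbabilityMeasure μ] (h : IsIIDSeq μ A B)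
    (hApos : ∀ t, ∀ᵐ ω ∂μ, ∀ i j, 0 ≤ A t ω i j) (hBpos : ∀ t, ∀ᵐ ω ∂μ, ∀ i, 0 ≤ B t ω i)
    (hAkronInt : ∀ i j, Integrable (fun ω => kronPow (A 0 ω) r i j) μ)
    (hBrInt : Integrable (fun ω => ‖B 0 ω‖ ^ r) μ) (t : ℤ) (k : ℕ) :
    ∫ ω, ‖prodA A t ω k *ᵥ B (t - k) ω‖ ^ r ∂μ
      ≤ ∑ i, ((of fun i j => ∫ ω, kronPow (A 0 ω) r i j ∂μ) ^ k *ᵥ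
          fun j => ∫ ω, kronPowVec (B 0 ω) r j ∂μ) i := by
  have hint := fun i => integrable_kronPowVec_prodA_mulVec h hAkronInt hBrInt t k i
  refine (integral_mono_ae
    (integrable_norm_prodA_mulVec_pow h hApos hBpos hAkronInt hBrInt t k)
    (integrable_finsetSum Finset.univ fun i _ => hint i)
    (norm_prodA_mulVec_pow_le_sum_kronPowVec hApos hBpos t k)).trans_eq ?_
  rw [integral_finsetSum _ fun i _ => hint i]
  exact Finset.sum_congr rfl fun i _ =>
    integral_kronPowVec_prodA_mulVec h hAkronInt hBrInt t k i

theorem tsum_eLpNorm_prodA_mulVec_ne_top [IsProbabilityMeasure μ] (hr : 1 ≤ r)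
    (h : IsIIDSeq μ A B)
    (hApos : ∀ t, ∀ᵐ ω ∂μ, ∀ i j, 0 ≤ A t ω i j) (hBpos : ∀ t, ∀ᵐ ω ∂μ, ∀ i, 0 ≤ B t ω i)
    (hAkronInt : ∀ i j, Integrable (fun ω => kronPow (A 0 ω) r i j) μ)
    (hBrInt : Integrable (fun ω => ‖B 0 ω‖ ^ r) μ)
    (hspec : ∀ z ∈ spectrum ℂ
      ((of fun i j => ∫ ω, kronPow (A 0 ω) r i j ∂μ).map (algebraMap ℝ ℂ)), ‖z‖ < 1) (t : ℤ) :
    ∑' k, eLpNorm (fun ω => prodA A t ω k *ᵥ B (t - k) ω) r μ ≠ ∞ := by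
  set b := fun j => ∫ ω, kronPowVec (B 0 ω) r j ∂μ
  obtain ⟨C, q, hC, hq0, hq1, hCq⟩ := exists_norm_pow_mulVec_le_geometric hspec
  have hmoment : ∀ k : ℕ, ∫ ω, ‖prodA A t ω k *ᵥ B (t - k) ω‖ ^ r ∂μ
      ≤ (n ^ r * C * ‖b‖) * q ^ k := fun k => calc
    _ ≤ ∑ i, ((of fun i j => ∫ ω, kronPow (A 0 ω) r i j ∂μ) ^ k *ᵥ b) i :=
      integral_norm_prodA_mulVec_pow_le h hApos hBpos hAkronInt hBrInt t k
    _ ≤ Fintype.card (Fin (n ^ r)) • ‖(of fun i j => ∫ ω, kronPow (A 0 ω) r i j ∂μ) ^ k *ᵥ b‖ :=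
      (Finset.sum_le_sum fun i _ => Real.le_norm_self _).trans (Pi.sum_norm_apply_le_norm _)
    _ ≤ n ^ r * (C * q ^ k * ‖b‖) := by
      rw [Fintype.card_fin, nsmul_eq_mul, Nat.cast_pow]
      exact mul_le_mul_of_nonneg_left (hCq k b) (by positivity)
    _ = (n ^ r * C * ‖b‖) * q ^ k := by ring
  refine ne_top_of_le_ne_top ?_ (ENNReal.tsum_le_tsum fun k =>
    eLpNorm_le_of_integral_norm_pow_le (by omega)
      (h.measurable_prodA_mulVec t k).aestronglyMeasurable
      (integrable_norm_prodA_mulVec_pow h hApos hBpos hAkronInt hBrInt t k) (hmoment k))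
  rw [← ENNReal.ofReal_tsum_of_nonneg (fun _ => by positivity)
    (summable_mul_pow_rpow (by positivity) hq0.le hq1 (by positivity))]
  exact ENNReal.ofReal_ne_top

end Moments

/-- **Higher-moment sufficiency via Kronecker powers.** If
`ρ(E[A₀^{⊗r}]) < 1` and `E[‖B₀‖^r] < ∞` (with the usual i.i.d./independence structure and
nonnegativity), then the partial sums `S_N(t) = B_t + ∑_{k=1}^N A_t ⋯ A_{t-k+1} B_{t-k}`
converge in `Lʳ` and almost surely to a limit `Y_t` with `E[‖Y_t‖^r] < ∞` satisfying
`Y_t = A_t Y_{t-1} + B_t`. -/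
theorem stmt18 {n : ℕ} {Ω : Type*} [MeasurableSpace Ω] (μ : Measure Ω) [IsProbabilityMeasure μ]
    (A : ℤ → Ω → Matrix (Fin n) (Fin n) ℝ) (B : ℤ → Ω → Fin n → ℝ) (r : ℕ) (hr : 1 ≤ r)
    (hmeas : ∀ t, Measurable fun ω => (A t ω, B t ω))
    (hindep : iIndepFun (fun t ω => (A t ω, B t ω)) μ)
    (hident : ∀ t, Measure.map (fun ω => (A t ω, B t ω)) μ
      = Measure.map (fun ω => (A 0 ω, B 0 ω)) μ)
    (hApos : ∀ t, ∀ᵐ ω ∂μ, ∀ i j, 0 ≤ A t ω i j)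
    (hBpos : ∀ t, ∀ᵐ ω ∂μ, ∀ i, 0 ≤ B t ω i)
    (hAkronInt : ∀ i j, Integrable (fun ω => kronPow (A 0 ω) r i j) μ)
    (hBrInt : Integrable (fun ω => ‖B 0 ω‖ ^ r) μ)
    (hspec : ∀ z ∈ spectrum ℂ
      ((Matrix.of fun i j => ∫ ω, kronPow (A 0 ω) r i j ∂μ).map (algebraMap ℝ ℂ)), ‖z‖ < 1) :
    ∀ t : ℤ,
      (∀ᵐ ω ∂μ, Summable fun k => prodA A t ω k *ᵥ B (t - k) ω) ∧
      Tendsto (fun N => ∫ ω, ‖(∑ k ∈ Finset.range (N + 1), prodA A t ω k *ᵥ B (t - k) ω) -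
          ∑' k, prodA A t ω k *ᵥ B (t - k) ω‖ ^ r ∂μ) atTop (𝓝 0) ∧
      Integrable (fun ω => ‖∑' k, prodA A t ω k *ᵥ B (t - k) ω‖ ^ r) μ ∧
      (∀ᵐ ω ∂μ, (∑' k, prodA A t ω k *ᵥ B (t - k) ω)
        = A t ω *ᵥ (∑' k, prodA A (t - 1) ω k *ᵥ B (t - 1 - k) ω) + B t ω) := by
  have h : IsIIDSeq μ A B :=
    ⟨hmeas, hindep, fun t => ⟨(hmeas t).aemeasurable, (hmeas 0).aemeasurable, hident t⟩⟩
  have hp : (1 : ℝ≥0∞) ≤ r := by exact_mod_cast hr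
  have hΔ : ∀ t k, AEStronglyMeasurable (fun ω => prodA A t ω k *ᵥ B (t - k) ω) μ :=
    fun t k => (h.measurable_prodA_mulVec t k).aestronglyMeasurable
  have hsum := tsum_eLpNorm_prodA_mulVec_ne_top hr h hApos hBpos hAkronInt hBrInt hspec
  intro t
  refine ⟨ae_summable_of_tsum_eLpNorm_ne_top hp (hΔ t) (hsum t),
    (tendsto_integral_norm_sum_range_sub_tsum_pow hr (hΔ t) (hsum t)).comp
      (tendsto_add_atTop_nat 1),
    (memLp_tsum_of_tsum_eLpNorm_ne_top hp (hΔ t) (hsum t)).integrable_norm_pow (by omega), ?_⟩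
  filter_upwards [ae_summable_of_tsum_eLpNorm_ne_top hp (hΔ (t - 1)) (hsum (t - 1))] with ω hω
  exact tsum_prodA_mulVec_eq hω
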